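/- arXiv:2311.12479 — 2 statements merged into one kernel-verified Lean document; each statement's English description precedes it below -/
import Mathlib

section
/- The generator t_{m+n+1,m+n+1}^{(1)} is central in X(osp_{2n+1|2m}); that is, it commutes with t_{kl}^{(r)} for all 1 ≤ k,l ≤ N and all r ≥ 1. -/
open scoped BigOperators

namespace OspYangianB

noncomputable section

/-- `N = 2m + 2n + 1`. -/
def NN (m n : ℕ) : ℕ := 2 * m + 2 * n + 1

lemma NN_pos (m n : ℕ) : 0 < NN m n := by unfold NN; omega

/-- `κ = n - m - 1/2`. -/
def kap (m n : ℕ) : ℂ := (n : ℂ) - (m : ℂ) - 1 / 2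

/-- the parity `p(i)` of a (1-based) index `i ∈ {1, …, N}`. -/
def parN (m n i : ℕ) : ℕ := if i ≤ m ∨ NN m n + 1 - m ≤ i then 1 else 0

/-- the sign `θ_i` attached to a (1-based) index `i ∈ {1, …, N}`. -/
def thN (m n i : ℕ) : ℂ := if NN m n + 1 - m ≤ i then -1 else 1

/-- the involution `i ↦ i′ = N + 1 - i` on (1-based) indices. -/
def prN (m n i : ℕ) : ℕ := NN m n + 1 - i

/-- conversion of a 1-based index `i ∈ {1, …, N}` into an element of `Fin (NN m n)`. -/
def fi (m n : ℕ) (i : ℕ) : Fin (NN m n) := ⟨(i - 1) % NN m n, Nat.mod_lt _ (NN_pos m n)⟩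

/-- the parity `p` on `Fin (NN m n)`. -/
def par (m n : ℕ) (i : Fin (NN m n)) : ℕ := parN m n ((i : ℕ) + 1)

/-- the sign `θ` on `Fin (NN m n)`. -/
def th (m n : ℕ) (i : Fin (NN m n)) : ℂ := thN m n ((i : ℕ) + 1)

/-- the involution `i ↦ i′` on `Fin (NN m n)`. -/
def pr (m n : ℕ) (i : Fin (NN m n)) : Fin (NN m n) := fi m n (prN m n ((i : ℕ) + 1))

/-- the free algebra on the generators `t_{ij}^{(r)}`, `1 ≤ i, j ≤ N`, `r ≥ 1`
(the last component of the index triple is `r - 1`). -/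
abbrev FA (m n : ℕ) := FreeAlgebra ℂ (Fin (NN m n) × Fin (NN m n) × ℕ)

/-- the coefficient of `u^{-a}` in the series `t_{ij}(u)`, inside the free algebra;
`a = 0` gives `δ_{ij}` and `a = r ≥ 1` gives the generator `t_{ij}^{(r)}`. -/
def tcF (m n : ℕ) (i j : Fin (NN m n)) : ℕ → FA m n
  | 0 => if i = j then 1 else 0
  | a + 1 => FreeAlgebra.ι ℂ (i, j, a)

/-- the coefficient of `u^{-a} v^{-b}` on the left-hand side of the defining relation
indexed by `(i, j, k, l)`. -/
def relLHS (m n : ℕ) (i j k l : Fin (NN m n)) (a b : ℕ) : FA m n :=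
  tcF m n i j a * tcF m n k l b -
    ((-1 : ℂ)) ^ ((par m n i + par m n j) * (par m n k + par m n l)) •
      (tcF m n k l b * tcF m n i j a)

/-- the coefficient of `u^{-a} v^{-b}` on the right-hand side of the defining relation
indexed by `(i, j, k, l)`, where `(u - v)⁻¹` is expanded as `Σ_{s ≥ 0} v^s u^{-s-1}`
and `(u - v - κ)⁻¹` as `Σ_{s ≥ 0} (v + κ)^s u^{-s-1}`. -/
def relRHS (m n : ℕ) (i j k l : Fin (NN m n)) (a b : ℕ) : FA m n :=
  ((-1 : ℂ)) ^ (par m n i * par m n j + par m n i * par m n k + par m n j * par m n k) •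
      ∑ s ∈ Finset.range a,
        (tcF m n k j (a - 1 - s) * tcF m n i l (b + s) -
          tcF m n k j (b + s) * tcF m n i l (a - 1 - s))
  - (if k = pr m n i then
      ∑ s ∈ Finset.range a, ∑ t ∈ Finset.range (s + 1),
        ((s.choose t : ℂ) * kap m n ^ (s - t)) •
          ∑ q : Fin (NN m n),
            (((-1 : ℂ)) ^ (par m n i + par m n i * par m n j + par m n j * par m n q) *
                th m n i * th m n q) •
              (tcF m n q j (a - 1 - s) * tcF m n (pr m n q) l (b + t))
    else 0)
  + (if l = pr m n j then
      ∑ s ∈ Finset.range a, ∑ t ∈ Finset.range (s + 1),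
        ((s.choose t : ℂ) * kap m n ^ (s - t)) •
          ∑ q : Fin (NN m n),
            (((-1 : ℂ)) ^ (par m n i * par m n k + par m n j * par m n k +
                  par m n i * par m n q) *
                th m n (pr m n j) * th m n (pr m n q)) •
              (tcF m n k (pr m n q) (b + t) * tcF m n i q (a - 1 - s))
    else 0)

/-- the defining relations of the extended Yangian `X(osp_{2n+1|2m})`:
the coefficients of every monomial `u^{-a} v^{-b}` on the two sides agree. -/
inductive yrel (m n : ℕ) : FA m n → FA m n → Prop
  | intro (i j k l : Fin (NN m n)) (a b : ℕ) :
      yrel m n (relLHS m n i j k l a b) (relRHS m n i j k l a b)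

/-- the extended Yangian `X(osp_{2n+1|2m})`. -/
abbrev XA (m n : ℕ) := RingQuot (yrel m n)

/-- the coefficient of `u^{-a}` in `t_{ij}(u)` inside the extended Yangian, with
1-based indices `i, j ∈ {1, …, N}`; `a = 0` gives `δ_{ij}` and `a = r ≥ 1` gives
the generator `t_{ij}^{(r)}`. -/
def tg (m n : ℕ) (i j : ℕ) (a : ℕ) : XA m n :=
  RingQuot.mkAlgHom ℂ (yrel m n) (tcF m n (fi m n i) (fi m n j) a)

/-- the generating set of the left ideal defining the Verma module `M(λ(u))`,
where `lam i ∈ ℂ[[u⁻¹]]` is the series `λ_i(u)`, with 1-based index `i`. -/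
def vermaGens (m n : ℕ) (lam : ℕ → PowerSeries ℂ) : Set (XA m n) :=
  {x | ∃ i j r : ℕ, 1 ≤ i ∧ i < j ∧ j ≤ NN m n ∧ 1 ≤ r ∧ x = tg m n i j r} ∪
  {x | ∃ i r : ℕ, 1 ≤ i ∧ i ≤ m + n + 1 ∧ 1 ≤ r ∧
      x = tg m n i i r - algebraMap ℂ (XA m n) (PowerSeries.coeff r (lam i))}

/-- the left ideal defining the Verma module `M(λ(u))`. -/
def vermaIdeal (m n : ℕ) (lam : ℕ → PowerSeries ℂ) : Submodule (XA m n) (XA m n) :=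
  Submodule.span (XA m n) (vermaGens m n lam)

/-- the Verma module `M(λ(u))`. -/
abbrev Verma (m n : ℕ) (lam : ℕ → PowerSeries ℂ) := XA m n ⧸ vermaIdeal m n lam

/-- the image of `1`, the highest vector of the Verma module. -/
def vermaHV (m n : ℕ) (lam : ℕ → PowerSeries ℂ) : Verma m n lam :=
  Submodule.Quotient.mk 1

/-- the sum of all submodules of `M(λ(u))` not containing the highest vector. -/
def maxSub (m n : ℕ) (lam : ℕ → PowerSeries ℂ) : Submodule (XA m n) (Verma m n lam) :=
  sSup {W | vermaHV m n lam ∉ W}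

/-- the irreducible highest weight module `L(λ(u))`. -/
abbrev Lmod (m n : ℕ) (lam : ℕ → PowerSeries ℂ) := Verma m n lam ⧸ maxSub m n lam

/-- the highest vector `ξ` of `L(λ(u))`. -/
def xi (m n : ℕ) (lam : ℕ → PowerSeries ℂ) : Lmod m n lam :=
  Submodule.Quotient.mk (vermaHV m n lam)

/-- the product `∏_{i=1}^{p} (1 + a_i u⁻¹)` as a power series in `u⁻¹`. -/
def linProd {p : ℕ} (a : Fin p → ℂ) : PowerSeries ℂ :=
  ∏ i, (1 + PowerSeries.C (a i) * PowerSeries.X)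

/-- the substitution `f(u) ↦ f(u + c)` on power series in `u⁻¹`, where
`(u+c)^{-r} = Σ_{k ≥ 0} C(r+k-1, k) (-c)^k u^{-r-k}`. -/
def shiftPS (c : ℂ) (f : PowerSeries ℂ) : PowerSeries ℂ :=
  PowerSeries.mk fun s =>
    if s = 0 then PowerSeries.constantCoeff f
    else ∑ r ∈ Finset.Icc 1 s,
      ((s - 1).choose (s - r) : ℂ) * (-c) ^ (s - r) * PowerSeries.coeff r f

/-- the odd reflection: `(α, β)` reflects to `(βt, αt)`. -/
def Reflects (α β βt αt : PowerSeries ℂ) : Prop :=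
  ∃ (p : ℕ) (a b : Fin p → ℂ) (γ : PowerSeries ℂ),
    PowerSeries.constantCoeff γ = 1 ∧
    (∀ i j, a i ≠ b j) ∧
    α = γ * linProd a ∧ β = γ * linProd b ∧
    αt = γ * linProd (fun i => a i + 1) ∧ βt = γ * linProd (fun i => b i + 1)

/-- `u^{-d} · P(u)` as a power series in `u⁻¹`. -/
def polyRev (P : Polynomial ℂ) (d : ℕ) : PowerSeries ℂ :=
  PowerSeries.mk fun r => if r ≤ d then P.coeff (d - r) else 0

/-- the condition `f(u) · P(u) = g(u) · P(u + c)` in `ℂ[[u⁻¹]][u]`, expressed after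
multiplication of both sides by `u^{-deg P}`. -/
def PolyCond (f g : PowerSeries ℂ) (P : Polynomial ℂ) (c : ℂ) : Prop :=
  f * polyRev P P.natDegree =
    g * polyRev (P.comp (Polynomial.X + Polynomial.C c)) P.natDegree

/-- conditions (★) on the highest weight tuple `λ(u) = (λ_1(u), …, λ_{m+n+1}(u))`;
`lamM i` stands for `λ_m^{[i]}(u)` (for `1 ≤ i ≤ n`) and `lamR i` for `λ_{m+i}^{[1]}(u)`. -/
def Star (m n : ℕ) (lam : ℕ → PowerSeries ℂ) : Prop :=
  ∃ (P : ℕ → Polynomial ℂ) (lamM lamR : ℕ → PowerSeries ℂ),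
    (∀ i, 1 ≤ i → i ≤ m + n → (P i).Monic) ∧
    (∀ i, 1 ≤ i → i ≤ n → PowerSeries.constantCoeff (lamM i) = 1) ∧
    (∀ i, 1 ≤ i → i ≤ n → PowerSeries.constantCoeff (lamR i) = 1) ∧
    Reflects (lam m) (lam (m + 1)) (lamR 1) (lamM 1) ∧
    (∀ i, 1 ≤ i → i ≤ n - 1 →
      Reflects (lamM i) (lam (m + i + 1)) (lamR (i + 1)) (lamM (i + 1))) ∧
    (∀ i, 1 ≤ i → i ≤ m - 1 → PolyCond (lam (i + 1)) (lam i) (P i) 1) ∧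
    (∀ j, m + 1 ≤ j → j ≤ m + n - 1 → PolyCond (lam j) (lam (j + 1)) (P j) 1) ∧
    PolyCond (lam (m + n)) (lam (m + n + 1)) (P (m + n)) (1 / 2) ∧
    PolyCond (lam (m + n + 1)) (lamM n) (P m) 1

/-- `c_i = -n + m + 1/2 + Σ_{k=1}^{i} (-1)^{p(k)}`. -/
def ci (m n i : ℕ) : ℂ :=
  -(n : ℂ) + (m : ℂ) + 1 / 2 + ∑ k ∈ Finset.Icc 1 i, ((-1 : ℂ)) ^ parN m n k

/-- the coefficient of `u^{-s}` in the shifted series `t_{ij}(u + c)` (1-based indices). -/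
def tgShift (m n : ℕ) (c : ℂ) (i j : ℕ) (s : ℕ) : XA m n :=
  if s = 0 then tg m n i j 0
  else ∑ e ∈ Finset.Icc 1 s, (((s - 1).choose (s - e) : ℂ) * (-c) ^ (s - e)) • tg m n i j e

/-- the coefficient of `u^{-r}` in the series
`Σ_{q=1}^{N} t_{1′q}(u - κ) · t_{1q′}(u) · (-1)^{p(q)} θ_q`. -/
def centralCoeff (m n : ℕ) (r : ℕ) : XA m n :=
  ∑ q ∈ Finset.Icc 1 (NN m n),
    (((-1 : ℂ)) ^ parN m n q * thN m n q) •
      ∑ s ∈ Finset.range (r + 1),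
        tgShift m n (-(kap m n)) (prN m n 1) q s * tg m n 1 (prN m n q) (r - s)

/-- the highest weight `λ°(u)` of the module `L°`:
`λ°_i(u) = 1 - n u⁻¹` for `i = 1, …, m`, `λ°_i(u) = 1 + (1/2) u⁻¹` for
`i = m+1, …, m+n`, and `λ°_{m+n+1}(u) = 1`. -/
def lamCirc (m n : ℕ) (i : ℕ) : PowerSeries ℂ :=
  if i ≤ m then 1 - PowerSeries.C (n : ℂ) * PowerSeries.X
  else if i ≤ m + n then 1 + PowerSeries.C (1 / 2 : ℂ) * PowerSeries.X
  else 1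

/-- the generating series `t_{ij}(u)` as a power series in `u⁻¹` with coefficients
in the extended Yangian (1-based indices). -/
def tser (m n : ℕ) (i j : ℕ) : PowerSeries (XA m n) :=
  PowerSeries.mk fun a => tg m n i j a

/-- the image of the generator `t_{ij}^{(r)}` (1-based indices) under the vector
representation: `δ_{r,1} (-1)^{p(i)} E_{ij} - (-κ)^{r-1} (-1)^{p(i)p(j)} θ_i θ_j E_{j′i′}`. -/
def vecRepMat (m n : ℕ) (i j r : ℕ) : Matrix (Fin (NN m n)) (Fin (NN m n)) ℂ :=
  (if r = 1 then ((-1 : ℂ)) ^ parN m n i else 0) •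
      Matrix.single (fi m n i) (fi m n j) (1 : ℂ)
  - ((-(kap m n)) ^ (r - 1) * ((-1 : ℂ)) ^ (parN m n i * parN m n j) *
        thN m n i * thN m n j) •
      Matrix.single (fi m n (prN m n j)) (fi m n (prN m n i)) (1 : ℂ)

/-- a complex number is a nonnegative integer. -/
def IsNonnegInt (x : ℂ) : Prop := ∃ k : ℕ, x = (k : ℂ)

end

end OspYangianB

/-!
Take the coefficient of `u^{-1} v^{-b}` in the defining relation with `i = j = c := m+n+1`.
Since `c` is even, the left side is the plain commutator of `t_{cc}^{(1)}` with `t_{kl}^{(b)}`.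
On the right side only the `u⁰`-coefficients `δ` can stand next to `t^{(b)}`, and since
`c′ = c` and `θ_c = 1`, the three resulting terms
`δ_{kc} t_{cl}^{(b)} - δ_{lc} t_{kc}^{(b)}`, `-δ_{kc} t_{cl}^{(b)}` and `+δ_{lc} t_{kc}^{(b)}` cancel.
-/

namespace OspYangianB

noncomputable section

variable (m n : ℕ)

def mid : Fin (NN m n) := fi m n (m + n + 1)

lemma mid_val : (mid m n : ℕ) = m + n := by
  show (m + n + 1 - 1) % NN m n = m + n
  rw [Nat.add_sub_cancel, Nat.mod_eq_of_lt]
  unfold NN; omega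

lemma par_mid : par m n (mid m n) = 0 := by
  unfold par parN
  rw [mid_val, if_neg]
  unfold NN; omega

lemma th_mid : th m n (mid m n) = 1 := by
  unfold th thN
  rw [mid_val, if_neg]
  unfold NN; omega

lemma pr_mid : pr m n (mid m n) = mid m n := by
  unfold pr prN
  rw [mid_val]
  congr 1
  unfold NN; omega

lemma tcF_zero (i j : Fin (NN m n)) : tcF m n i j 0 = if i = j then 1 else 0 := rfl

lemma relLHS_mid_mid_one (k l : Fin (NN m n)) (b : ℕ) :
    relLHS m n (mid m n) (mid m n) k l 1 b =
      tcF m n (mid m n) (mid m n) 1 * tcF m n k l b -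
        tcF m n k l b * tcF m n (mid m n) (mid m n) 1 := by
  rw [relLHS, par_mid, add_zero, zero_mul, pow_zero, one_smul]

lemma relRHS_mid_mid_one (k l : Fin (NN m n)) (b : ℕ) :
    relRHS m n (mid m n) (mid m n) k l 1 b = 0 := by
  set c := mid m n
  have hdelta : ∑ s ∈ Finset.range 1,
      (tcF m n k c (1 - 1 - s) * tcF m n c l (b + s) -
        tcF m n k c (b + s) * tcF m n c l (1 - 1 - s)) =
      (if k = c then tcF m n c l b else 0) - if l = c then tcF m n k c b else 0 := by
    simp only [Finset.sum_range_one, Nat.sub_self, add_zero, tcF_zero, ite_mul, mul_ite,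
      one_mul, mul_one, zero_mul, mul_zero, eq_comm (a := c)]
  have hleft : ∑ s ∈ Finset.range 1, ∑ t ∈ Finset.range (s + 1),
      ((s.choose t : ℂ) * kap m n ^ (s - t)) • ∑ q : Fin (NN m n), th m n q •
        (tcF m n q c (1 - 1 - s) * tcF m n (pr m n q) l (b + t)) = tcF m n c l b := by
    simp [tcF_zero, th_mid, pr_mid, c]
  have hright : ∑ s ∈ Finset.range 1, ∑ t ∈ Finset.range (s + 1),
      ((s.choose t : ℂ) * kap m n ^ (s - t)) • ∑ q : Fin (NN m n), th m n (pr m n q) •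
        (tcF m n k (pr m n q) (b + t) * tcF m n c q (1 - 1 - s)) = tcF m n k c b := by
    simp [tcF_zero, th_mid, pr_mid, c]
  rw [relRHS, pr_mid, par_mid, th_mid, hdelta]
  simp only [zero_mul, mul_zero, add_zero, pow_zero, one_mul, one_smul]
  rw [hleft, hright]
  split_ifs <;> abel

end

end OspYangianB

open OspYangianB in
theorem middle_diagonal_generator_is_central_general (m n : ℕ) :
    ∀ k l, 1 ≤ k → k ≤ NN m n → 1 ≤ l → l ≤ NN m n → ∀ r, 1 ≤ r →
      tg m n (m + n + 1) (m + n + 1) 1 * tg m n k l r =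
        tg m n k l r * tg m n (m + n + 1) (m + n + 1) 1 := by
  intro k l _ _ _ _ r _
  have hrel := RingQuot.mkAlgHom_rel ℂ
    (yrel.intro (m := m) (n := n) (mid m n) (mid m n) (fi m n k) (fi m n l) 1 r)
  rw [relLHS_mid_mid_one, relRHS_mid_mid_one, map_zero, map_sub, sub_eq_zero, map_mul,
    map_mul] at hrel
  exact hrel

open OspYangianB in
/-- the generator `t_{m+n+1,m+n+1}^{(1)}` is central in the extended
Yangian `X(osp_{2n+1|2m})`. -/
theorem middle_diagonal_generator_is_central (m n : ℕ) (hm : 1 ≤ m) (hn : 1 ≤ n) :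
    ∀ k l, 1 ≤ k → k ≤ NN m n → 1 ≤ l → l ≤ NN m n → ∀ r, 1 ≤ r →
      tg m n (m + n + 1) (m + n + 1) 1 * tg m n k l r =
        tg m n k l r * tg m n (m + n + 1) (m + n + 1) 1 :=
  middle_diagonal_generator_is_central_general m n
end

section
/- Let p ≥ 1 be an integer, c a nonzero complex number, and λ_1,…,λ_p, μ_1,…,μ_p complex numbers. Suppose there exists a monic polynomial P ∈ ℂ[u] such that Π_{a=1}^{p}(u+μ_a)·P(u) = Π_{a=1}^{p}(u+λ_a)·P(u+c) as polynomials in ℂ[u]. Then there is a permutation σ of {1,…,p} such that μ_{σ(a)} − λ_a ∈ c·ℤ≥0 for every a = 1,…,p, i.e., each difference μ_{σ(a)} − λ_a is a nonnegative integer multiple of c. -/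
open scoped BigOperators

/-!
Write `S` for the roots of `P`. Comparing roots, the hypothesis says that the multiset
`{-μ_a} + S` equals `{-λ_a} + (S - c)`. If `S` is nonempty, pick `s ∈ S` maximizing `Re (s / c)`;
then `s + c ∉ S`, so `s ∉ S - c`, and `s` must be one of the `-λ_a`. Replacing that `-λ_a` by
`s - c` and removing `s` from `S` gives an equation of the same shape with a smaller `S`,
and a matching of the new family with `{-μ_a}` is one of the old family, the shifted entry moving
one more step `c`. When `S` is empty the two families agree as multisets.
-/

open Polynomial Finset

theorem Multiset.exists_mem_add_notMem {c : ℂ} (hc : c ≠ 0) {S : Multiset ℂ} (hS : S ≠ 0) :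
    ∃ s ∈ S, s + c ∉ S := by
  obtain ⟨s, hs, hmax⟩ :=
    S.toFinset.exists_max_image (fun z => (z / c).re) (Multiset.toFinset_nonempty.2 hS)
  refine ⟨s, Multiset.mem_toFinset.1 hs, fun hsc => ?_⟩
  have := hmax _ (Multiset.mem_toFinset.2 hsc)
  simp only [add_div, div_self hc, Complex.add_re, Complex.one_re] at this
  linarith

theorem Multiset.cons_map_update {ι α : Type*} [DecidableEq ι] {s : Finset ι} {i : ι}
    (hi : i ∈ s) (f : ι → α) (v : α) :
    f i ::ₘ s.val.map (Function.update f i v) = v ::ₘ s.val.map f := by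
  have hrest : (s.val.erase i).map (Function.update f i v) = (s.val.erase i).map f :=
    Multiset.map_congr rfl fun j hj =>
      Function.update_of_ne (s.nodup.mem_erase_iff.1 hj).1 _ _
  rw [← Multiset.cons_erase (show i ∈ s.val from hi), Multiset.map_cons, Multiset.map_cons,
    Function.update_self, hrest, Multiset.cons_swap]

theorem Multiset.exists_perm_apply_eq_of_map_univ_eq {ι α : Type*} [Fintype ι] {f g : ι → α}
    (h : univ.val.map f = univ.val.map g) : ∃ σ : Equiv.Perm ι, ∀ i, g (σ i) = f i := by
  classical
  have hcard : ∀ b, Fintype.card {i // f i = b} = Fintype.card {i // g i = b} := by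
    intro b
    simpa [Fintype.card_subtype, Finset.card_def, Finset.filter_val, Multiset.count_map,
      eq_comm] using congrArg (Multiset.count b) h
  exact ⟨Equiv.ofFiberEquiv fun b => Fintype.equivOfCardEq (hcard b), Equiv.ofFiberEquiv_map _⟩

theorem Multiset.exists_perm_sub_eq_nat_mul_of_map_add_eq {ι : Type*} [Fintype ι] {c : ℂ}
    (hc : c ≠ 0) (S : Multiset ℂ) (f g : ι → ℂ)
    (h : univ.val.map g + S = univ.val.map f + S.map (· - c)) :
    ∃ σ : Equiv.Perm ι, ∀ i, ∃ k : ℕ, f i - g (σ i) = k * c := by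
  classical
  induction S using Multiset.strongInductionOn generalizing f with
  | ih S ih =>
  rcases eq_or_ne S 0 with rfl | hS
  · obtain ⟨σ, hσ⟩ := exists_perm_apply_eq_of_map_univ_eq (by simpa using h.symm)
    exact ⟨σ, fun i => ⟨0, by simp [hσ]⟩⟩
  obtain ⟨s, hsS, hs⟩ := exists_mem_add_notMem hc hS
  obtain ⟨i₀, -, rfl⟩ : ∃ i₀ ∈ univ.val, f i₀ = s := by
    have hmem : s ∈ univ.val.map f + S.map (· - c) := h ▸ Multiset.mem_add.2 (Or.inr hsS)
    rcases Multiset.mem_add.1 hmem with hf | hshift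
    · exact Multiset.mem_map.1 hf
    · obtain ⟨t, ht, rfl⟩ := Multiset.mem_map.1 hshift
      exact (hs (by simpa using ht)).elim
  set f' := Function.update f i₀ (f i₀ - c)
  have h' : univ.val.map g + S.erase (f i₀) =
      univ.val.map f' + (S.erase (f i₀)).map (· - c) := by
    apply (Multiset.cons_inj_right (f i₀)).1
    calc f i₀ ::ₘ (univ.val.map g + S.erase (f i₀))
        = univ.val.map g + S := by rw [← Multiset.add_cons, Multiset.cons_erase hsS]
      _ = (f i₀ - c) ::ₘ univ.val.map f + (S.erase (f i₀)).map (· - c) := by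
        rw [h, ← Multiset.cons_erase hsS, Multiset.map_cons, Multiset.add_cons,
          Multiset.erase_cons_head, Multiset.cons_add]
      _ = f i₀ ::ₘ (univ.val.map f' + (S.erase (f i₀)).map (· - c)) := by
        rw [← cons_map_update (mem_univ i₀), Multiset.cons_add]
  obtain ⟨σ, hσ⟩ := ih _ (Multiset.erase_lt.2 hsS) f' h'
  refine ⟨σ, fun i => ?_⟩
  obtain ⟨k, hk⟩ := hσ i
  rcases eq_or_ne i i₀ with rfl | hi
  · refine ⟨k + 1, ?_⟩
    simp only [f', Function.update_self] at hk
    push_cast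
    linear_combination hk
  · exact ⟨k, by simpa [f', hi] using hk⟩

theorem Polynomial.roots_prod_X_add_C {ι R : Type*} [CommRing R] [IsDomain R] (s : Finset ι)
    (f : ι → R) : (∏ i ∈ s, (X + C (f i))).roots = s.val.map fun i => -f i := by
  rw [roots_prod _ _ (monic_prod_of_monic _ _ fun i _ => monic_X_add_C (f i)).ne_zero]
  simp [roots_X_add_C, Multiset.bind_singleton]

theorem Polynomial.roots_comp_X_add_C {R : Type*} [CommRing R] [IsDomain R] (p : R[X]) (c : R) :
    (p.comp (X + C c)).roots = p.roots.map (· - c) := by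
  simpa using roots_comp_C_mul_X_add_C p 1 c isUnit_one

open OspYangianB in
theorem renumbering_principle_general (p : ℕ) (c : ℂ) (hc : c ≠ 0)
    (la mu : Fin p → ℂ) (P : Polynomial ℂ) (hP : P.Monic)
    (h : (∏ a, (Polynomial.X + Polynomial.C (mu a))) * P =
        (∏ a, (Polynomial.X + Polynomial.C (la a))) *
          P.comp (Polynomial.X + Polynomial.C c)) :
    ∃ σ : Equiv.Perm (Fin p), ∀ a, ∃ k : ℕ, mu (σ a) - la a = (k : ℂ) * c := by
  have monic_prod : ∀ ν : Fin p → ℂ, (∏ a, (X + C (ν a))).Monic := fun ν =>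
    monic_prod_of_monic _ _ fun a _ => monic_X_add_C (ν a)
  have hroots : univ.val.map (fun a => -mu a) + P.roots =
      univ.val.map (fun a => -la a) + P.roots.map (· - c) := by
    have := congrArg roots h
    rwa [roots_mul ((monic_prod mu).mul hP).ne_zero,
      roots_mul ((monic_prod la).mul (hP.comp_X_add_C c)).ne_zero, roots_prod_X_add_C,
      roots_prod_X_add_C, roots_comp_X_add_C] at this
  obtain ⟨σ, hσ⟩ := Multiset.exists_perm_sub_eq_nat_mul_of_map_add_eq hc _ _ _ hroots
  refine ⟨σ, fun a => ?_⟩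
  obtain ⟨k, hk⟩ := hσ a
  exact ⟨k, by linear_combination hk⟩

open OspYangianB in
/-- the renumbering principle: if
`Π(u + μ_a) · P(u) = Π(u + λ_a) · P(u + c)` for a monic polynomial `P` and `c ≠ 0`,
then after a permutation each difference `μ_{σ(a)} - λ_a` lies in `c·ℤ≥0`. -/
theorem renumbering_principle (p : ℕ) (hp : 1 ≤ p) (c : ℂ) (hc : c ≠ 0)
    (la mu : Fin p → ℂ) (P : Polynomial ℂ) (hP : P.Monic)
    (h : (∏ a, (Polynomial.X + Polynomial.C (mu a))) * P =
        (∏ a, (Polynomial.X + Polynomial.C (la a))) *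
          P.comp (Polynomial.X + Polynomial.C c)) :
    ∃ σ : Equiv.Perm (Fin p), ∀ a, ∃ k : ℕ, mu (σ a) - la a = (k : ℂ) * c :=
  renumbering_principle_general p c hc la mu P hP h
end
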